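/- arXiv:2103.13472 — 3 statements merged into one kernel-verified Lean document; each statement's English description precedes it below -/
import Mathlib

section
/- Let φ(x) = φ₀(|x|) with φ₀ : [0,∞) → [0,1] nonincreasing and supported in [0,R], and ψ(x) = (1/|x|)∫₀^{|x|} φ₀(r) dr. Then |ψ(x) − φ(x)| ≤ C min{|x|/R, R/|x|} for some constant C independent of x and R; in particular ∫_{R₀}^{R₀ e^J} |ψ(x) − φ(x)|(dR/R) ≤ C' uniformly in x, where φ, ψ depend on the scale R. -/
/-!
Below the scale `R`, the Lipschitz bound `L / R` keeps the average of `φ₀` over `[0, t]` within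
`L t / R` of its endpoint value `φ₀ t`; above it `φ₀ t = 0`, and the average is at most `R / t`
since `φ₀ ≤ 1` is supported in `[0, R]`.
The kernel `min (t / R) (R / t) / R` is bounded by `1 / t` and by `t / R ^ 2`, so over any range
of scales it integrates to at most `1` on `R ≤ t` and at most `1` on `R ≥ t`.
-/

open MeasureTheory

noncomputable section

abbrev E5 := EuclideanSpace ℝ (Fin 5)

open Set intervalIntegral

theorem min_div_div_eq_left_of_le {t R : ℝ} (ht : 0 < t) (htR : t ≤ R) :
    min (t / R) (R / t) = t / R :=
  min_eq_left <| by rw [div_le_div_iff₀ (ht.trans_le htR) ht]; nlinarith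

theorem min_div_div_eq_right_of_le {t R : ℝ} (hR : 0 < R) (hRt : R ≤ t) :
    min (t / R) (R / t) = R / t := by
  rw [min_comm]; exact min_div_div_eq_left_of_le hR hRt

theorem abs_average_sub_le_of_lipschitzWith {f : ℝ → ℝ} {K : NNReal} (hf : LipschitzWith K f)
    {t : ℝ} (ht : 0 < t) : |(∫ r in (0:ℝ)..t, f r) / t - f t| ≤ K * t := by
  have hrepr : (∫ r in (0:ℝ)..t, f r) / t - f t = (∫ r in (0:ℝ)..t, (f r - f t)) / t := by
    rw [integral_sub (hf.continuous.intervalIntegrable _ _) intervalIntegrable_const,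
      intervalIntegral.integral_const, smul_eq_mul]
    field_simp
    ring
  have hbound : ‖∫ r in (0:ℝ)..t, (f r - f t)‖ ≤ K * t * |t - 0| := by
    refine norm_integral_le_of_norm_le_const fun r hr => ?_
    rw [uIoc_of_le ht.le] at hr
    calc ‖f r - f t‖ = dist (f r) (f t) := (dist_eq_norm _ _).symm
      _ ≤ K * dist r t := hf.dist_le_mul r t
      _ ≤ K * t := by
        gcongr
        rw [Real.dist_eq, abs_of_nonpos] <;> linarith [hr.1, hr.2]
  rw [hrepr, abs_div, abs_of_pos ht, div_le_iff₀ ht]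
  simpa [abs_of_pos ht] using hbound

theorem abs_integral_le_of_abs_le_one_of_eq_zero {f : ℝ → ℝ} (hf : Continuous f) {R t : ℝ}
    (hR : 0 ≤ R) (hRt : R ≤ t) (hf_le : ∀ r ∈ Ioc 0 R, |f r| ≤ 1)
    (hf_zero : ∀ r, R ≤ r → f r = 0) : |∫ r in (0:ℝ)..t, f r| ≤ R := by
  have htail : ∫ r in R..t, f r = 0 := by
    rw [integral_congr (g := fun _ => (0 : ℝ)) fun r hr => hf_zero r (uIcc_of_le hRt ▸ hr).1,
      intervalIntegral.integral_zero]
  have hhead : ‖∫ r in (0:ℝ)..R, f r‖ ≤ 1 * |R - 0| :=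
    norm_integral_le_of_norm_le_const fun r hr => hf_le r (uIoc_of_le hR ▸ hr)
  rw [← integral_add_adjacent_intervals (hf.intervalIntegrable 0 R) (hf.intervalIntegrable R t),
    htail, add_zero]
  simpa [abs_of_nonneg hR] using hhead

theorem abs_average_sub_le_mul_min {L R : ℝ} (hL : 0 ≤ L) (hR : 0 < R) {f : ℝ → ℝ}
    (hf_le : ∀ r, 0 ≤ r → |f r| ≤ 1) (hf_zero : ∀ r, R ≤ r → f r = 0)
    (hf_lip : ∀ a b, |f a - f b| ≤ L / R * |a - b|) {t : ℝ} (ht : 0 < t) :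
    |(∫ r in (0:ℝ)..t, f r) / t - f t| ≤ max L 1 * min (t / R) (R / t) := by
  have hlip : LipschitzWith ⟨L / R, by positivity⟩ f :=
    .of_dist_le_mul fun a b => by rw [Real.dist_eq, Real.dist_eq]; exact hf_lip a b
  rcases le_total t R with htR | hRt
  · rw [min_div_div_eq_left_of_le ht htR]
    calc _ ≤ L / R * t := abs_average_sub_le_of_lipschitzWith hlip ht
      _ = L * (t / R) := by ring
      _ ≤ max L 1 * (t / R) := by gcongr; exact le_max_left _ _
  · rw [min_div_div_eq_right_of_le hR hRt, hf_zero t hRt, sub_zero, abs_div, abs_of_pos ht]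
    calc _ ≤ R / t := by
          gcongr
          exact abs_integral_le_of_abs_le_one_of_eq_zero hlip.continuous hR.le hRt
            (fun r hr => hf_le r hr.1.le) hf_zero
      _ ≤ max L 1 * (R / t) := le_mul_of_one_le_left (by positivity) (le_max_right _ _)

theorem min_div_div_div_le_inv {t R : ℝ} (ht : 0 < t) (hR : 0 < R) :
    min (t / R) (R / t) / R ≤ 1 / t :=
  calc _ ≤ R / t / R := by gcongr; exact min_le_right _ _
    _ = 1 / t := by field_simp

theorem min_div_div_div_le_div_sq {t R : ℝ} (hR : 0 < R) :
    min (t / R) (R / t) / R ≤ t / R ^ 2 :=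
  calc _ ≤ t / R / R := by gcongr; exact min_le_left _ _
    _ = t / R ^ 2 := by field_simp

theorem intervalIntegrable_min_div_div_div {t a b : ℝ} (ha : 0 < a) (hab : a ≤ b) :
    IntervalIntegrable (fun R => min (t / R) (R / t) / R) volume a b := by
  refine ContinuousOn.intervalIntegrable fun R hR => ?_
  have hR : R ≠ 0 := (ha.trans_le (uIcc_of_le hab ▸ hR).1).ne'
  exact ContinuousAt.continuousWithinAt (by fun_prop (disch := exact hR))

theorem integral_min_div_div_div_le_sub_div {t a b : ℝ} (ht : 0 < t) (ha : 0 < a) (hab : a ≤ b) :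
    ∫ R in a..b, min (t / R) (R / t) / R ≤ (b - a) / t :=
  calc _ ≤ ∫ _ in a..b, 1 / t :=
        integral_mono_on hab (intervalIntegrable_min_div_div_div ha hab) intervalIntegrable_const
          fun R hR => min_div_div_div_le_inv ht (ha.trans_le hR.1)
    _ = (b - a) / t := by rw [intervalIntegral.integral_const, smul_eq_mul, mul_one_div]

theorem integral_min_div_div_div_le_div {t a b : ℝ} (ht : 0 < t) (ha : 0 < a) (hab : a ≤ b) :
    ∫ R in a..b, min (t / R) (R / t) / R ≤ t / a := by
  have hpos : ∀ R ∈ uIcc a b, 0 < R := fun R hR => ha.trans_le (uIcc_of_le hab ▸ hR).1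
  have hderiv : ∀ R ∈ uIcc a b, HasDerivAt (fun R => -t * R⁻¹) (t / R ^ 2) R := fun R hR =>
    ((hasDerivAt_inv (hpos R hR).ne').const_mul (-t)).congr_deriv (by ring)
  have hint : IntervalIntegrable (fun R => t / R ^ 2) volume a b :=
    ContinuousOn.intervalIntegrable fun R hR =>
      (continuousAt_const.div (continuousAt_id.pow 2)
        (pow_ne_zero 2 (hpos R hR).ne')).continuousWithinAt
  calc _ ≤ ∫ R in a..b, t / R ^ 2 :=
        integral_mono_on hab (intervalIntegrable_min_div_div_div ha hab) hint
          fun R hR => min_div_div_div_le_div_sq (ha.trans_le hR.1)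
    _ = t / a - t / b := by rw [integral_eq_sub_of_hasDerivAt hderiv hint]; ring
    _ ≤ t / a := sub_le_self _ (div_pos ht (ha.trans_le hab)).le

theorem integral_min_div_div_div_le_two {t a b : ℝ} (ht : 0 < t) (ha : 0 < a) (hab : a ≤ b) :
    ∫ R in a..b, min (t / R) (R / t) / R ≤ 2 := by
  set c := min a t
  set d := max b t
  have hc : 0 < c := lt_min ha ht
  have hct : c ≤ t := min_le_right a t
  have htd : t ≤ d := le_max_right b t
  have hnonneg : 0 ≤ᵐ[volume.restrict (Ioc c d)] fun R => min (t / R) (R / t) / R :=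
    ae_restrict_of_forall_mem measurableSet_Ioc fun R hR => by
      have := hc.trans hR.1
      positivity
  calc _ ≤ ∫ R in c..d, min (t / R) (R / t) / R :=
        integral_mono_interval (min_le_left a t) hab (le_max_left b t) hnonneg
          (intervalIntegrable_min_div_div_div hc (hct.trans htd))
    _ = (∫ R in c..t, min (t / R) (R / t) / R) + ∫ R in t..d, min (t / R) (R / t) / R :=
        (integral_add_adjacent_intervals (intervalIntegrable_min_div_div_div hc hct)
          (intervalIntegrable_min_div_div_div ht htd)).symm
    _ ≤ (t - c) / t + t / t :=
        add_le_add (integral_min_div_div_div_le_sub_div ht hc hct)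
          (integral_min_div_div_div_le_div ht ht htd)
    _ ≤ 2 := by
        have : (t - c) / t ≤ 1 := div_le_one_of_le₀ (by linarith) ht.le
        rw [div_self ht.ne']
        linarith

theorem stmt4 (L : ℝ) (hL : 0 < L) :
    (∃ C > (0:ℝ), ∀ (R : ℝ), 0 < R → ∀ φ₀ : ℝ → ℝ,
      (∀ r ∈ Set.Ici (0:ℝ), φ₀ r ∈ Set.Icc (0:ℝ) 1) →
      AntitoneOn φ₀ (Set.Ici 0) →
      (∀ r, R ≤ r → φ₀ r = 0) →
      (∀ a b, |φ₀ a - φ₀ b| ≤ L / R * |a - b|) →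
      ∀ x : E5, x ≠ 0 →
        |(∫ r in (0:ℝ)..‖x‖, φ₀ r) / ‖x‖ - φ₀ ‖x‖|
          ≤ C * min (‖x‖ / R) (R / ‖x‖)) ∧
    ∃ C' > (0:ℝ), ∀ (R₀ J : ℝ), 0 < R₀ → 0 < J → ∀ x : E5, x ≠ 0 →
      ∫ R in R₀..(R₀ * Real.exp J), min (‖x‖ / R) (R / ‖x‖) / R ≤ C' := by
  refine ⟨⟨max L 1, lt_max_of_lt_right one_pos, fun R hR φ₀ hφ₀ _ hsupp hlip x hx => ?_⟩,
    2, two_pos, fun R₀ J hR₀ hJ x hx => ?_⟩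
  · have hφ₀_le : ∀ r, 0 ≤ r → |φ₀ r| ≤ 1 := fun r hr =>
      abs_le.mpr ⟨by linarith [(hφ₀ r hr).1], (hφ₀ r hr).2⟩
    exact abs_average_sub_le_mul_min hL.le hR hφ₀_le hsupp hlip (norm_pos_iff.mpr hx)
  · exact integral_min_div_div_div_le_two (norm_pos_iff.mpr hx) hR₀
      (le_mul_of_one_le_right hR₀.le (Real.one_le_exp hJ.le))

end
end

section
/- For fixed x, y ∈ ℝ⁵ and a smooth cutoff χ with compact support, the expression 𝒦(u^ξ)(x)ℳ(u^ξ)(y) − (1/4)𝒯(u^ξ)(x)·𝒯(u^ξ)(y), integrated against χ²((x−s)/R)χ²((y−s)/R) over x,y, is independent of ξ ∈ ℝ⁵; that is, ∫∫ χ²((x−s)/R)χ²((y−s)/R)[𝒦(u^ξ)(x)ℳ(u^ξ)(y) − (1/4)𝒯(u^ξ)(x)·𝒯(u^ξ)(y)] dx dy = ∫∫ χ²((x−s)/R)χ²((y−s)/R)[𝒦(u)(x)ℳ(u)(y) − (1/4)𝒯(u)(x)·𝒯(u)(y)] dx dy. -/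
open Complex MeasureTheory

noncomputable section

/-- `j`-th partial derivative of a complex-valued function on ℝ⁵. -/
def pd (f : E5 → ℂ) (j : Fin 5) (x : E5) : ℂ :=
  fderiv ℝ f x (EuclideanSpace.single j 1)

/-- Galilean transform `u^ξ(x) = e^{i a x·ξ} u(x)` with `a = α/γ`. -/
def galilean (a : ℝ) (ξ : E5) (u : E5 → ℂ) (y : E5) : ℂ :=
  Complex.exp (Complex.I * ((a * ∑ i, y i * ξ i : ℝ) : ℂ)) * u y

/-- `ℳ(u)(x) = ∑ₖ (αₖ²/γₖ)|uₖ(x)|²`. -/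
def Mdens {l : ℕ} (α γ : Fin l → ℝ) (u : Fin l → E5 → ℂ) (x : E5) : ℝ :=
  ∑ k, α k ^ 2 / γ k * ‖u k x‖ ^ 2

/-- `𝒦(u)(x) = ∑ₖ γₖ|∇uₖ(x)|²`. -/
def Kdens {l : ℕ} (γ : Fin l → ℝ) (u : Fin l → E5 → ℂ) (x : E5) : ℝ :=
  ∑ k, γ k * ∑ j, ‖pd (u k) j x‖ ^ 2

/-- `j`-th component of `𝒯(u)(x) = 2 Im ∑ₖ αₖ ∇uₖ(x) conj uₖ(x)`. -/
def Tdens {l : ℕ} (α : Fin l → ℝ) (u : Fin l → E5 → ℂ) (j : Fin 5) (x : E5) : ℝ :=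
  2 * ∑ k, α k * (pd (u k) j x * (starRingEnd ℂ) (u k x)).im

/-! ### Auxiliary complex-number identities -/

lemma absSq_aux (b c : ℝ) (z w : ℂ) :
    ‖Complex.I * b * c * w + z‖ ^ 2
      = ‖z‖ ^ 2 + b ^ 2 * c ^ 2 * ‖w‖ ^ 2
        + 2 * b * c * (z * (starRingEnd ℂ) w).im := by
  simp only [Complex.sq_norm, Complex.normSq_apply, Complex.add_re, Complex.add_im,
    Complex.mul_re, Complex.mul_im, Complex.I_re, Complex.I_im, Complex.ofReal_re,
    Complex.ofReal_im, Complex.conj_re, Complex.conj_im]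
  ring

lemma im_aux (b c : ℝ) (z w : ℂ) :
    ((Complex.I * b * c * w + z) * (starRingEnd ℂ) w).im
      = (z * (starRingEnd ℂ) w).im + b * c * ‖w‖ ^ 2 := by
  simp only [Complex.sq_norm, Complex.normSq_apply, Complex.add_re, Complex.add_im,
    Complex.mul_re, Complex.mul_im, Complex.I_re, Complex.I_im, Complex.ofReal_re,
    Complex.ofReal_im, Complex.conj_re, Complex.conj_im]
  ring

lemma exp_mul_conj (r : ℝ) :
    Complex.exp (Complex.I * (r : ℂ)) * (starRingEnd ℂ) (Complex.exp (Complex.I * (r : ℂ))) = 1 := by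
  rw [← Complex.exp_conj, ← Complex.exp_add]
  have h : Complex.I * (r : ℂ) + (starRingEnd ℂ) (Complex.I * (r : ℂ)) = 0 := by
    simp [map_mul, Complex.conj_I, Complex.conj_ofReal]
  rw [h, Complex.exp_zero]

lemma abs_exp_I_mul (r : ℝ) : ‖Complex.exp (Complex.I * (r : ℂ))‖ = 1 := by
  simp [Complex.norm_exp]

/-! ### Derivative of the Galilean transform -/

lemma pd_galilean (a : ℝ) (ξ : E5) (u : E5 → ℂ) (hu : Differentiable ℝ u) (j : Fin 5) (x : E5) :
    pd (galilean a ξ u) j x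
      = Complex.exp (Complex.I * ((a * ∑ i, x i * ξ i : ℝ) : ℂ)) *
          (Complex.I * a * ξ j * u x + pd u j x) := by
  set N : E5 →L[ℝ] ℂ := (Complex.I * (a : ℂ)) • (Complex.ofRealCLM.comp (innerSL ℝ ξ)) with hNdef
  have hNx : ∀ y : E5, N y = Complex.I * ((a * ∑ i, y i * ξ i : ℝ) : ℂ) := by
    intro y
    have hsum : (∑ i, y i * ξ i) = ∑ i, ξ i * y i :=
      Finset.sum_congr rfl fun i _ => mul_comm _ _
    simp [hNdef, PiLp.inner_apply, hsum, RCLike.inner_apply]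
    ring
  have hexp : HasFDerivAt (fun y : E5 => Complex.exp (N y)) (Complex.exp (N x) • N) x :=
    (N.hasFDerivAt).cexp
  have hmul := hexp.mul (hu x).hasFDerivAt
  have hg : galilean a ξ u = fun y => Complex.exp (N y) * u y := by
    funext y; rw [galilean, hNx]
  have hNs : N (EuclideanSpace.single j 1) = Complex.I * a * ξ j := by
    have h1 : (∑ i, ξ i * (EuclideanSpace.single j (1 : ℝ)) i) = ξ j := by
      simp [EuclideanSpace.single_apply, mul_ite, Finset.sum_ite_eq']
    simp [hNdef, PiLp.inner_apply, RCLike.inner_apply, h1]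
  rw [pd, hg, show (fun y => Complex.exp (N y) * u y) = (fun y => Complex.exp (N y)) * u from rfl, hmul.fderiv]
  simp only [ContinuousLinearMap.add_apply, ContinuousLinearMap.smul_apply, hNs, hNx]
  rw [← pd]
  simp only [smul_eq_mul]
  ring

/-! ### Transformation of the densities -/

lemma Mdens_gal {l : ℕ} (α γ : Fin l → ℝ) (ξ : E5) (u : Fin l → E5 → ℂ) (x : E5) :
    Mdens α γ (fun k => galilean (α k / γ k) ξ (u k)) x = Mdens α γ u x := by
  unfold Mdens galilean
  refine Finset.sum_congr rfl fun k _ => ?_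
  rw [norm_mul, abs_exp_I_mul, one_mul]

lemma Tdens_gal {l : ℕ} (α γ : Fin l → ℝ) (hγ : ∀ k, 0 < γ k) (ξ : E5) (u : Fin l → E5 → ℂ)
    (hu : ∀ k, Differentiable ℝ (u k)) (j : Fin 5) (x : E5) :
    Tdens α (fun k => galilean (α k / γ k) ξ (u k)) j x
      = Tdens α u j x + 2 * ξ j * Mdens α γ u x := by
  have key : ∀ k, α k * ((pd (galilean (α k / γ k) ξ (u k)) j x) *
        (starRingEnd ℂ) (galilean (α k / γ k) ξ (u k) x)).im
      = α k * (pd (u k) j x * (starRingEnd ℂ) (u k x)).im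
        + ξ j * (α k ^ 2 / γ k * ‖u k x‖ ^ 2) := by
    intro k
    rw [pd_galilean _ _ _ (hu k)]
    unfold galilean
    rw [map_mul]
    have h1 : ∀ (e z w : ℂ), e * z * ((starRingEnd ℂ) e * (starRingEnd ℂ) w)
        = (e * (starRingEnd ℂ) e) * (z * (starRingEnd ℂ) w) := fun e z w => by ring
    rw [h1, exp_mul_conj, one_mul, im_aux]
    have hg := (hγ k).ne'
    field_simp
  unfold Tdens Mdens
  rw [Finset.sum_congr rfl fun k _ => key k, Finset.sum_add_distrib, ← Finset.mul_sum]
  ring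

lemma Kdens_gal {l : ℕ} (α γ : Fin l → ℝ) (hγ : ∀ k, 0 < γ k) (ξ : E5) (u : Fin l → E5 → ℂ)
    (hu : ∀ k, Differentiable ℝ (u k)) (x : E5) :
    Kdens γ (fun k => galilean (α k / γ k) ξ (u k)) x
      = Kdens γ u x + (∑ j, ξ j ^ 2) * Mdens α γ u x + ∑ j, ξ j * Tdens α u j x := by
  have key : ∀ k, γ k * ∑ j, ‖pd (galilean (α k / γ k) ξ (u k)) j x‖ ^ 2
      = γ k * ∑ j, ‖pd (u k) j x‖ ^ 2
        + (∑ j, ξ j ^ 2) * (α k ^ 2 / γ k * ‖u k x‖ ^ 2)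
        + ∑ j, ξ j * (2 * (α k * (pd (u k) j x * (starRingEnd ℂ) (u k x)).im)) := by
    intro k
    have hj : ∀ j : Fin 5, ‖pd (galilean (α k / γ k) ξ (u k)) j x‖ ^ 2
        = ‖pd (u k) j x‖ ^ 2
          + (α k / γ k) ^ 2 * (ξ j) ^ 2 * ‖u k x‖ ^ 2
          + 2 * (α k / γ k) * (ξ j) * (pd (u k) j x * (starRingEnd ℂ) (u k x)).im := by
      intro j
      rw [pd_galilean _ _ _ (hu k), norm_mul, abs_exp_I_mul, one_mul, absSq_aux]
    rw [Finset.sum_congr rfl fun j _ => hj j]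
    simp only [Fin.sum_univ_five]
    have hg := (hγ k).ne'
    field_simp
    ring
  unfold Kdens Mdens
  rw [Finset.sum_congr rfl fun k _ => key k, Finset.sum_add_distrib, Finset.sum_add_distrib,
    ← Finset.mul_sum, Finset.sum_comm]
  congr 1
  refine Finset.sum_congr rfl fun j _ => ?_
  rw [Tdens, Finset.mul_sum, Finset.mul_sum]

/-! ### The double-integral factorization -/

lemma double_eq (c K M : E5 → ℝ) (T : Fin 5 → E5 → ℝ)
    (hK : Integrable (fun x => c x * K x))
    (hM : Integrable (fun x => c x * M x))
    (hT : ∀ j, Integrable (fun x => c x * T j x)) :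
    (∫ x : E5, ∫ y : E5, c x * c y * (K x * M y - (1 / 4 : ℝ) * ∑ j, T j x * T j y))
      = (∫ x : E5, c x * K x) * (∫ x : E5, c x * M x)
        - (1 / 4 : ℝ) * ∑ j, (∫ x : E5, c x * T j x) * (∫ x : E5, c x * T j x) := by
  have inner : ∀ x : E5,
      (∫ y : E5, c x * c y * (K x * M y - (1 / 4 : ℝ) * ∑ j, T j x * T j y))
        = (∫ y : E5, c y * M y) * (c x * K x)
          - ∑ j, ((1 / 4 : ℝ) * (∫ y : E5, c y * T j y)) * (c x * T j x) := by
    intro x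
    have hfun : (fun y : E5 => c x * c y * (K x * M y - (1 / 4 : ℝ) * ∑ j, T j x * T j y))
        = fun y => (c x * K x) * (c y * M y)
          - ∑ j, ((1 / 4 : ℝ) * (c x * T j x)) * (c y * T j y) := by
      funext y; simp only [Fin.sum_univ_five]; ring
    rw [hfun, integral_sub (hM.const_mul _)
      (integrable_finset_sum _ fun j _ => (hT j).const_mul _),
      integral_finset_sum _ fun j _ => (hT j).const_mul _]
    simp only [MeasureTheory.integral_const_mul]
    simp only [Fin.sum_univ_five]; ring
  rw [integral_congr_ae (Filter.Eventually.of_forall inner),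
    integral_sub (hK.const_mul _) (integrable_finset_sum _ fun j _ => (hT j).const_mul _),
    integral_finset_sum _ fun j _ => (hT j).const_mul _]
  simp only [MeasureTheory.integral_const_mul]
  simp only [Fin.sum_univ_five]; ring

theorem stmt8 (l : ℕ) (u : Fin l → E5 → ℂ) (α γ : Fin l → ℝ)
    (hα : ∀ k, 0 < α k) (hγ : ∀ k, 0 < γ k)
    (hu : ∀ k, Differentiable ℝ (u k)) (huL2 : ∀ k, MemLp (u k) 2 volume)
    (χ : E5 → ℝ) (hχ : ContDiff ℝ (⊤ : ℕ∞) χ) (hχc : HasCompactSupport χ)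
    (s : E5) (R : ℝ) (hR : 0 < R)
    (hintK : Integrable (fun x : E5 => χ (R⁻¹ • (x - s)) ^ 2 * Kdens γ u x))
    (hintM : Integrable (fun x : E5 => χ (R⁻¹ • (x - s)) ^ 2 * Mdens α γ u x))
    (hintT : ∀ j, Integrable (fun x : E5 => χ (R⁻¹ • (x - s)) ^ 2 * Tdens α u j x))
    (ξ : E5) :
    (∫ x : E5, ∫ y : E5, χ (R⁻¹ • (x - s)) ^ 2 * χ (R⁻¹ • (y - s)) ^ 2 *
        (Kdens γ (fun k => galilean (α k / γ k) ξ (u k)) x *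
            Mdens α γ (fun k => galilean (α k / γ k) ξ (u k)) y
          - (1 / 4 : ℝ) * ∑ j, Tdens α (fun k => galilean (α k / γ k) ξ (u k)) j x *
              Tdens α (fun k => galilean (α k / γ k) ξ (u k)) j y))
      =
    ∫ x : E5, ∫ y : E5, χ (R⁻¹ • (x - s)) ^ 2 * χ (R⁻¹ • (y - s)) ^ 2 *
        (Kdens γ u x * Mdens α γ u y
          - (1 / 4 : ℝ) * ∑ j, Tdens α u j x * Tdens α u j y) := by
  have hgM : ∀ x, Mdens α γ (fun k => galilean (α k / γ k) ξ (u k)) x = Mdens α γ u x :=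
    fun x => Mdens_gal α γ ξ u x
  have hgT : ∀ (j : Fin 5) x, Tdens α (fun k => galilean (α k / γ k) ξ (u k)) j x
      = Tdens α u j x + 2 * ξ j * Mdens α γ u x := fun j x => Tdens_gal α γ hγ ξ u hu j x
  have hgK : ∀ x, Kdens γ (fun k => galilean (α k / γ k) ξ (u k)) x
      = Kdens γ u x + (∑ j, ξ j ^ 2) * Mdens α γ u x + ∑ j, ξ j * Tdens α u j x :=
    fun x => Kdens_gal α γ hγ ξ u hu x
  have hMg : Integrable (fun x : E5 =>
      χ (R⁻¹ • (x - s)) ^ 2 * Mdens α γ (fun k => galilean (α k / γ k) ξ (u k)) x) := by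
    have h : (fun x : E5 => χ (R⁻¹ • (x - s)) ^ 2 *
          Mdens α γ (fun k => galilean (α k / γ k) ξ (u k)) x)
        = fun x : E5 => χ (R⁻¹ • (x - s)) ^ 2 * Mdens α γ u x := funext fun x => by rw [hgM]
    rw [h]; exact hintM
  have hTg : ∀ j, Integrable (fun x : E5 =>
      χ (R⁻¹ • (x - s)) ^ 2 * Tdens α (fun k => galilean (α k / γ k) ξ (u k)) j x) := by
    intro j
    have h : (fun x : E5 => χ (R⁻¹ • (x - s)) ^ 2 *
          Tdens α (fun k => galilean (α k / γ k) ξ (u k)) j x)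
        = fun x : E5 => χ (R⁻¹ • (x - s)) ^ 2 * Tdens α u j x
            + (2 * ξ j) * (χ (R⁻¹ • (x - s)) ^ 2 * Mdens α γ u x) :=
      funext fun x => by rw [hgT]; ring
    rw [h]; exact (hintT j).add (hintM.const_mul _)
  have hKg : Integrable (fun x : E5 =>
      χ (R⁻¹ • (x - s)) ^ 2 * Kdens γ (fun k => galilean (α k / γ k) ξ (u k)) x) := by
    have h : (fun x : E5 => χ (R⁻¹ • (x - s)) ^ 2 *
          Kdens γ (fun k => galilean (α k / γ k) ξ (u k)) x)
        = fun x : E5 => χ (R⁻¹ • (x - s)) ^ 2 * Kdens γ u x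
            + (∑ j, ξ j ^ 2) * (χ (R⁻¹ • (x - s)) ^ 2 * Mdens α γ u x)
            + ∑ j, ξ j * (χ (R⁻¹ • (x - s)) ^ 2 * Tdens α u j x) :=
      funext fun x => by rw [hgK]; simp only [Fin.sum_univ_five]; ring
    rw [h]
    exact (hintK.add (hintM.const_mul _)).add
      (integrable_finset_sum _ fun j _ => (hintT j).const_mul _)
  refine (double_eq (fun x => χ (R⁻¹ • (x - s)) ^ 2)
      (Kdens γ (fun k => galilean (α k / γ k) ξ (u k)))
      (Mdens α γ (fun k => galilean (α k / γ k) ξ (u k)))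
      (Tdens α (fun k => galilean (α k / γ k) ξ (u k))) hKg hMg hTg).trans
    (Eq.trans ?_ (double_eq (fun x => χ (R⁻¹ • (x - s)) ^ 2)
      (Kdens γ u) (Mdens α γ u) (Tdens α u) hintK hintM hintT).symm)
  have hIM : (∫ x : E5, χ (R⁻¹ • (x - s)) ^ 2 *
        Mdens α γ (fun k => galilean (α k / γ k) ξ (u k)) x)
      = ∫ x : E5, χ (R⁻¹ • (x - s)) ^ 2 * Mdens α γ u x :=
    integral_congr_ae (Filter.Eventually.of_forall fun x => by simp only [hgM])
  have hIT : ∀ j, (∫ x : E5, χ (R⁻¹ • (x - s)) ^ 2 *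
        Tdens α (fun k => galilean (α k / γ k) ξ (u k)) j x)
      = (∫ x : E5, χ (R⁻¹ • (x - s)) ^ 2 * Tdens α u j x)
        + (2 * ξ j) * ∫ x : E5, χ (R⁻¹ • (x - s)) ^ 2 * Mdens α γ u x := by
    intro j
    calc (∫ x : E5, χ (R⁻¹ • (x - s)) ^ 2 *
          Tdens α (fun k => galilean (α k / γ k) ξ (u k)) j x)
        = ∫ x : E5, (χ (R⁻¹ • (x - s)) ^ 2 * Tdens α u j x
            + (2 * ξ j) * (χ (R⁻¹ • (x - s)) ^ 2 * Mdens α γ u x)) :=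
          integral_congr_ae (Filter.Eventually.of_forall fun x => by simp only [hgT]; ring)
      _ = (∫ x : E5, χ (R⁻¹ • (x - s)) ^ 2 * Tdens α u j x)
            + (2 * ξ j) * ∫ x : E5, χ (R⁻¹ • (x - s)) ^ 2 * Mdens α γ u x := by
          rw [integral_add (hintT j) (hintM.const_mul _), MeasureTheory.integral_const_mul]
  have hIK : (∫ x : E5, χ (R⁻¹ • (x - s)) ^ 2 *
        Kdens γ (fun k => galilean (α k / γ k) ξ (u k)) x)
      = (∫ x : E5, χ (R⁻¹ • (x - s)) ^ 2 * Kdens γ u x)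
        + (∑ j, ξ j ^ 2) * (∫ x : E5, χ (R⁻¹ • (x - s)) ^ 2 * Mdens α γ u x)
        + ∑ j, ξ j * ∫ x : E5, χ (R⁻¹ • (x - s)) ^ 2 * Tdens α u j x := by
    calc (∫ x : E5, χ (R⁻¹ • (x - s)) ^ 2 *
          Kdens γ (fun k => galilean (α k / γ k) ξ (u k)) x)
        = ∫ x : E5, (χ (R⁻¹ • (x - s)) ^ 2 * Kdens γ u x
            + (∑ j, ξ j ^ 2) * (χ (R⁻¹ • (x - s)) ^ 2 * Mdens α γ u x)
            + ∑ j, ξ j * (χ (R⁻¹ • (x - s)) ^ 2 * Tdens α u j x)) :=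
          integral_congr_ae (Filter.Eventually.of_forall fun x => by
            simp only [hgK, Fin.sum_univ_five]; ring)
      _ = (∫ x : E5, χ (R⁻¹ • (x - s)) ^ 2 * Kdens γ u x)
            + (∑ j, ξ j ^ 2) * (∫ x : E5, χ (R⁻¹ • (x - s)) ^ 2 * Mdens α γ u x)
            + ∑ j, ξ j * ∫ x : E5, χ (R⁻¹ • (x - s)) ^ 2 * Tdens α u j x := by
          have hA : Integrable (fun x : E5 => χ (R⁻¹ • (x - s)) ^ 2 * Kdens γ u x
              + (∑ j, ξ j ^ 2) * (χ (R⁻¹ • (x - s)) ^ 2 * Mdens α γ u x)) :=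
            hintK.add (hintM.const_mul _)
          have hB : Integrable (fun x : E5 =>
              ∑ j, ξ j * (χ (R⁻¹ • (x - s)) ^ 2 * Tdens α u j x)) :=
            integrable_finset_sum _ fun j _ => (hintT j).const_mul _
          rw [integral_add hA hB, integral_add hintK (hintM.const_mul _),
            integral_finset_sum _ fun j _ => (hintT j).const_mul _]
          simp only [MeasureTheory.integral_const_mul]
  rw [hIM, hIK]
  simp only [hIT]
  simp only [Fin.sum_univ_five]
  ring

end
end

section
/- Let a_{jk}, b_{jk} ≥ 0 (representing γ_k, α_k, and moduli of functions). For complex-valued data, the pointwise quantity S = (∑_k γ_k |V_k(x)|²) ℳ(u)(y) + (∑_k γ_k |W_k(y)|²) ℳ(u)(x) − 2(∑_k α_k Im[V_k ū_k](x)) · (∑_k α_k Im[W_k ū_k](y)) satisfies S ≥ ∑_{j,m} (√(γ_m/γ_j) α_j |V_m(x)||u_j(y)| − √(γ_j/γ_m) α_m |W_j(y)||u_m(x)|)² ≥ 0, where ℳ(u)(x) = ∑_k (α_k²/γ_k)|u_k(x)|², V_k(x) ∈ ℂ⁵ and W_k(y) ∈ ℂ⁵ are arbitrary vectors with |Im[V_k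 ū_k](x)| ≤ |V_k(x)||u_k(x)| (Cauchy–Schwarz). -/
/-! Expanding the squares, the double sum equals the first two terms of `S` minus
`2 (∑ α_k |V_k||a_k|)(∑ α_k |W_k||b_k|)`; the factors `√(γ_q/γ_p)` and `√(γ_p/γ_q)` cancel in
the cross term. It remains to bound the dot product of the vectors `∑ α_k Im[V_k ā_k]` and
`∑ α_k Im[W_k b̄_k]` of `ℝ⁵` by that product: Cauchy–Schwarz, then the triangle inequality. -/

open Finset

theorem norm_sum_smul_le_of_nonneg {ι E : Type*} [SeminormedAddCommGroup E] [NormedSpace ℝ E]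
    (s : Finset ι) {c : ι → ℝ} (hc : ∀ k ∈ s, 0 ≤ c k) (f : ι → E) :
    ‖∑ k ∈ s, c k • f k‖ ≤ ∑ k ∈ s, c k * ‖f k‖ :=
  (norm_sum_le _ _).trans_eq (sum_congr rfl fun k hk => norm_smul_of_nonneg (hc k hk) (f k))

theorem sum_mul_sum_le_of_sqrt_sum_sq_le {ι J : Type*} [Fintype ι] [Fintype J]
    {α β M N : ι → ℝ} (hα : ∀ k, 0 ≤ α k) (hβ : ∀ k, 0 ≤ β k) {F G : ι → J → ℝ}
    (hF : ∀ k, √(∑ j, F k j ^ 2) ≤ M k) (hG : ∀ k, √(∑ j, G k j ^ 2) ≤ N k) :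
    ∑ j, (∑ k, α k * F k j) * (∑ k, β k * G k j) ≤ (∑ k, α k * M k) * (∑ k, β k * N k) := by
  set f : ι → EuclideanSpace ℝ J := fun k => WithLp.toLp 2 (F k)
  set g : ι → EuclideanSpace ℝ J := fun k => WithLp.toLp 2 (G k)
  have norm_toLp (H : J → ℝ) : ‖(WithLp.toLp 2 H : EuclideanSpace ℝ J)‖ = √(∑ j, H j ^ 2) := by
    simp [EuclideanSpace.norm_eq]
  have hA : ‖∑ k, α k • f k‖ ≤ ∑ k, α k * M k :=
    (norm_sum_smul_le_of_nonneg _ (fun k _ => hα k) f).trans <|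
      sum_le_sum fun k _ => mul_le_mul_of_nonneg_left ((norm_toLp _).trans_le (hF k)) (hα k)
  have hB : ‖∑ k, β k • g k‖ ≤ ∑ k, β k * N k :=
    (norm_sum_smul_le_of_nonneg _ (fun k _ => hβ k) g).trans <|
      sum_le_sum fun k _ => mul_le_mul_of_nonneg_left ((norm_toLp _).trans_le (hG k)) (hβ k)
  calc _ = inner ℝ (∑ k, α k • f k) (∑ k, β k • g k) := by
        simp [PiLp.inner_apply, f, g, mul_comm]
    _ ≤ ‖∑ k, α k • f k‖ * ‖∑ k, β k • g k‖ := real_inner_le_norm _ _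
    _ ≤ _ := mul_le_mul hA hB (norm_nonneg _) ((norm_nonneg _).trans hA)

theorem sqrt_div_mul_sub_sqrt_div_mul_sq {a b : ℝ} (ha : 0 < a) (hb : 0 < b) (s t : ℝ) :
    (√(b / a) * s - √(a / b) * t) ^ 2 = b / a * s ^ 2 + a / b * t ^ 2 - 2 * (s * t) := by
  have hprod : √(b / a) * √(a / b) = 1 := by
    rw [← Real.sqrt_mul (div_pos hb ha).le, div_mul_div_comm, mul_comm b, div_self (by positivity),
      Real.sqrt_one]
  calc _ = √(b / a) ^ 2 * s ^ 2 + √(a / b) ^ 2 * t ^ 2 - 2 * (√(b / a) * √(a / b)) * (s * t) := by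
        ring
    _ = _ := by rw [Real.sq_sqrt (div_pos hb ha).le, Real.sq_sqrt (div_pos ha hb).le, hprod, mul_one]

theorem sum_sum_sqrt_div_mul_sub_sq {ι : Type*} [Fintype ι] {γ : ι → ℝ} (hγ : ∀ k, 0 < γ k)
    (α x u y v : ι → ℝ) :
    ∑ p, ∑ q, (√(γ q / γ p) * α p * x q * u p - √(γ p / γ q) * α q * y p * v q) ^ 2
      = (∑ k, γ k * x k ^ 2) * (∑ k, α k ^ 2 / γ k * u k ^ 2)
        + (∑ k, γ k * y k ^ 2) * (∑ k, α k ^ 2 / γ k * v k ^ 2)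
        - 2 * ((∑ k, α k * (x k * v k)) * (∑ k, α k * (y k * u k))) := by
  rw [mul_comm (∑ k, γ k * x k ^ 2), mul_comm (∑ k, α k * (x k * v k))]
  simp_rw [mul_assoc (√_), sqrt_div_mul_sub_sqrt_div_mul_sq (hγ _) (hγ _), sum_mul_sum, mul_sum,
    ← sum_add_distrib, ← sum_sub_distrib]
  refine sum_congr rfl fun p _ => sum_congr rfl fun q _ => ?_
  field_simp

theorem stmt9 (l : ℕ) (α γ : Fin l → ℝ) (hα : ∀ k, 0 < α k) (hγ : ∀ k, 0 < γ k)
    (a b : Fin l → ℂ) (V W : Fin l → EuclideanSpace ℂ (Fin 5))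
    -- Cauchy–Schwarz: `|Im[V_k ā_k]| ≤ |V_k||a_k|` and `|Im[W_k b̄_k]| ≤ |W_k||b_k|`
    (hV : ∀ k, Real.sqrt (∑ j, ((V k j) * (starRingEnd ℂ) (a k)).im ^ 2)
            ≤ ‖V k‖ * ‖a k‖)
    (hW : ∀ k, Real.sqrt (∑ j, ((W k j) * (starRingEnd ℂ) (b k)).im ^ 2)
            ≤ ‖W k‖ * ‖b k‖) :
    (∑ p : Fin l, ∑ q : Fin l,
        (Real.sqrt (γ q / γ p) * α p * ‖V q‖ * ‖b p‖
          - Real.sqrt (γ p / γ q) * α q * ‖W p‖ * ‖a q‖) ^ 2)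
      ≤ (∑ k, γ k * ‖V k‖ ^ 2) * (∑ k, α k ^ 2 / γ k * ‖b k‖ ^ 2)
        + (∑ k, γ k * ‖W k‖ ^ 2) * (∑ k, α k ^ 2 / γ k * ‖a k‖ ^ 2)
        - 2 * ∑ j : Fin 5,
            (∑ k, α k * ((V k j) * (starRingEnd ℂ) (a k)).im) *
            (∑ k, α k * ((W k j) * (starRingEnd ℂ) (b k)).im)
    ∧ (0:ℝ) ≤ ∑ p : Fin l, ∑ q : Fin l,
        (Real.sqrt (γ q / γ p) * α p * ‖V q‖ * ‖b p‖
          - Real.sqrt (γ p / γ q) * α q * ‖W p‖ * ‖a q‖) ^ 2 := by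
  refine ⟨?_, by positivity⟩
  rw [sum_sum_sqrt_div_mul_sub_sq hγ]
  linarith [sum_mul_sum_le_of_sqrt_sum_sq_le (fun k => (hα k).le) (fun k => (hα k).le) hV hW]
end
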